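/- arXiv:cs/0502064 — 3 statements merged into one kernel-verified Lean document; each statement's English description precedes it below -/
import Mathlib

section
/- Every initial Mealy machine transforms an ultimately recurrent infinite word to an ultimately recurrent infinite word. -/
/-!
The output is a letterwise image of the word of pairs (state, input letter), so it suffices that
this pair word is ultimately recurrent. On a recurrent suffix of the input, finiteness of the
state set yields a position `t` such that arbitrarily long windows starting at `t` recur with the
same state at their start; by determinism the states then agree along the whole window, so the
pair word is recurrent from `t` on.
-/

/-- A Mealy machine with state set `Q`, input alphabet `A`, output alphabet `B`. -/
structure Mealy (Q A B : Type*) where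
  step : Q → A → Q
  out  : Q → A → B

namespace Mealy

variable {Q A B : Type*}

/-- Extension of the transition function to finite words. -/
def stepW (M : Mealy Q A B) : Q → List A → Q
  | q, [] => q
  | q, a :: u => M.stepW (M.step q a) u

/-- Extension of the output function to finite words. -/
def outW (M : Mealy Q A B) : Q → List A → List B
  | _, [] => []
  | q, a :: u => M.out q a :: M.outW (M.step q a) u

end Mealy

/-- The length-`n` prefix `x[0,n-1]` of an infinite word. -/
def wordPrefix {A : Type*} (x : ℕ → A) (n : ℕ) : List A :=
  List.ofFn (fun i : Fin n => x i)

/-- The initial machine `(M, q₀)` transforms the infinite word `x` to `y`. -/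
def Mealy.Transforms {Q A B : Type*} (M : Mealy Q A B) (q₀ : Q)
    (x : ℕ → A) (y : ℕ → B) : Prop :=
  ∀ n, wordPrefix y n = M.outW q₀ (wordPrefix x n)

/-- `w` occurs in the infinite word `x` at position `m`. -/
def IsFactorAt {A : Type*} (x : ℕ → A) (w : List A) (m : ℕ) : Prop :=
  w = List.ofFn (fun i : Fin w.length => x (m + i))

/-- `w` is a factor of the infinite word `x`. -/
def IsFactor {A : Type*} (x : ℕ → A) (w : List A) : Prop :=
  ∃ m, IsFactorAt x w m

/-- An infinite word is recurrent if every factor occurs infinitely often. -/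
def Recurrent {A : Type*} (x : ℕ → A) : Prop :=
  ∀ w, IsFactor x w → ∀ N, ∃ m ≥ N, IsFactorAt x w m

/-- `x` is ultimately recurrent: some suffix of `x` is recurrent. -/
def UltimatelyRecurrent {A : Type*} (x : ℕ → A) : Prop :=
  ∃ k, Recurrent (fun n => x (n + k))

/-- The infinite word `u v^ω`. -/
def upWord {A : Type*} (u v : List A) (hv : v ≠ []) : ℕ → A :=
  fun n =>
    if h : n < u.length then u.get ⟨n, h⟩
    else v.get ⟨(n - u.length) % v.length, Nat.mod_lt _ (List.length_pos_iff.mpr hv)⟩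

/-- `x` is ultimately periodic: `x = u v^ω`. -/
def UltimatelyPeriodic {A : Type*} (x : ℕ → A) : Prop :=
  ∃ (u v : List A) (hv : v ≠ []), x = upWord u v hv

/-- The subword complexity `f_x(n)`: number of distinct length-`n` factors of `x`. -/
noncomputable def complexity {A : Type*} (x : ℕ → A) (n : ℕ) : ℕ :=
  Set.ncard {w : List A | w.length = n ∧ IsFactor x w}

/-- The growth function `g_x(n) = ∑_{i=0}^n f_x(i)`. -/
noncomputable def growth {A : Type*} (x : ℕ → A) (n : ℕ) : ℕ :=
  ∑ i ∈ Finset.range (n + 1), complexity x i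

/-- The series (cascade) composition of two Mealy machines. -/
def Mealy.series {Q₁ Q₂ A B₁ B₂ : Type*} (M₁ : Mealy Q₁ A B₁)
    (M₂ : Mealy Q₂ B₁ B₂) : Mealy (Q₁ × Q₂) A B₂ where
  step := fun p a => (M₁.step p.1 a, M₂.step p.2 (M₁.out p.1 a))
  out  := fun p a => M₂.out p.2 (M₁.out p.1 a)

/-- An initial Mealy machine over the fixed countable alphabet ℕ:
finite state set `Fin k`, finite input and output alphabets `A, B ⊆ ℕ`. -/
structure MachineN where
  k : ℕ
  A : Finset ℕ
  B : Finset ℕ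
  M : Mealy (Fin k) A B
  q₀ : Fin k

/-- `V` transforms the ℕ-valued infinite word `x` (which must be apt for `V`,
i.e. take values in `V.A`) to `y`. -/
def MachineN.TransformsN (V : MachineN) (x y : ℕ → ℕ) : Prop :=
  ∃ (x' : ℕ → V.A) (y' : ℕ → V.B),
    (∀ n, (x' n : ℕ) = x n) ∧ (∀ n, (y' n : ℕ) = y n) ∧
    V.M.Transforms V.q₀ x' y'

/-- `x ⇀ y` : some initial Mealy machine transforms `x` to `y`. -/
def TransN (x y : ℕ → ℕ) : Prop := ∃ V : MachineN, V.TransformsN x y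

/-- The set 𝔉 of all infinite words over finite subalphabets of ℕ. -/
def FWords : Set (ℕ → ℕ) := {x | (Set.range x).Finite}

/-- A nonempty set of infinite words is machine invariant if every initial
Mealy machine transforms all apt words of it into words of it. -/
def MachineInvariant (K : Set (ℕ → ℕ)) : Prop :=
  K.Nonempty ∧ K ⊆ FWords ∧ ∀ x ∈ K, ∀ y, TransN x y → y ∈ K

open Filter

theorem Mealy.stepW_append {Q A B : Type*} (M : Mealy Q A B) (q : Q) (u v : List A) :
    M.stepW q (u ++ v) = M.stepW (M.stepW q u) v := by
  induction u generalizing q with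
  | nil => rfl
  | cons a u ih => exact ih _

theorem Mealy.outW_append {Q A B : Type*} (M : Mealy Q A B) (q : Q) (u v : List A) :
    M.outW q (u ++ v) = M.outW q u ++ M.outW (M.stepW q u) v := by
  induction u generalizing q with
  | nil => rfl
  | cons a u ih => simp only [List.cons_append, Mealy.outW, Mealy.stepW, ih]

theorem wordPrefix_succ {A : Type*} (x : ℕ → A) (n : ℕ) :
    wordPrefix x (n + 1) = wordPrefix x n ++ [x n] := by
  rw [wordPrefix, List.ofFn_succ_last]
  rfl

def IsRun {Q A : Type*} (δ : Q → A → Q) (p : ℕ → Q) (x : ℕ → A) : Prop :=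
  ∀ n, p (n + 1) = δ (p n) (x n)

theorem Mealy.isRun_stepW_wordPrefix {Q A B : Type*} (M : Mealy Q A B) (q₀ : Q) (x : ℕ → A) :
    IsRun M.step (fun n => M.stepW q₀ (wordPrefix x n)) x := fun n => by
  simp only [wordPrefix_succ, Mealy.stepW_append]
  rfl

theorem Mealy.Transforms.apply_eq {Q A B : Type*} {M : Mealy Q A B} {q₀ : Q} {x : ℕ → A}
    {y : ℕ → B} (h : M.Transforms q₀ x y) (n : ℕ) :
    y n = M.out (M.stepW q₀ (wordPrefix x n)) (x n) := by
  have h' := h (n + 1)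
  rw [wordPrefix_succ, wordPrefix_succ, Mealy.outW_append, ← h n] at h'
  simpa [Mealy.outW] using List.append_cancel_left h'

namespace IsRun

variable {Q A : Type*} {δ : Q → A → Q} {p : ℕ → Q} {x : ℕ → A}

theorem shift (hp : IsRun δ p x) (k : ℕ) :
    IsRun δ (fun n => p (n + k)) (fun n => x (n + k)) := fun n => by
  rw [← hp (n + k), Nat.add_right_comm]

theorem add_eq_of_window (hp : IsRun δ p x) {m t n : ℕ} (h0 : p m = p t)
    (hw : ∀ i < n, x (m + i) = x (t + i)) : ∀ i ≤ n, p (m + i) = p (t + i) := by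
  intro i hi
  induction i with
  | zero => exact h0
  | succ i ih => rw [← add_assoc, ← add_assoc, hp, hp, ih (by omega), hw i (by omega)]

end IsRun

theorem isFactorAt_iff {A : Type*} {x : ℕ → A} {w : List A} {m : ℕ} :
    IsFactorAt x w m ↔ ∀ i (hi : i < w.length), w[i] = x (m + i) := by
  refine ⟨fun h i hi => by rw [List.getElem_of_eq h, List.getElem_ofFn], fun h => ?_⟩
  exact List.ext_getElem (by simp) fun i h₁ _ => by rw [h i h₁, List.getElem_ofFn]

def RecurrentAt {A : Type*} (x : ℕ → A) (t : ℕ) : Prop :=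
  ∀ n, ∃ᶠ m in atTop, ∀ i < n, x (m + i) = x (t + i)

section Recurrence

variable {A B : Type*} {x : ℕ → A}

theorem Recurrent.recurrentAt (hx : Recurrent x) (t : ℕ) : RecurrentAt x t := fun n => by
  have hfac : IsFactorAt x (List.ofFn fun i : Fin n => x (t + i)) t :=
    isFactorAt_iff.mpr fun i _ => List.getElem_ofFn ..
  refine frequently_atTop.mpr fun N => ?_
  obtain ⟨m, hmN, hm⟩ := hx _ ⟨t, hfac⟩ N
  refine ⟨m, hmN, fun i hi => ?_⟩
  have := isFactorAt_iff.mp hm i (by simpa using hi)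
  rwa [List.getElem_ofFn, eq_comm] at this

theorem RecurrentAt.recurrent_shift {t : ℕ} (hx : RecurrentAt x t) :
    Recurrent fun n => x (n + t) := by
  rintro w ⟨ρ, hρ⟩ N
  obtain ⟨m, hmN, hm⟩ := frequently_atTop.mp (hx (ρ + w.length)) (N + t)
  refine ⟨m - t + ρ, by omega, isFactorAt_iff.mpr fun i hi => ?_⟩
  rw [isFactorAt_iff.mp hρ i hi, show m - t + ρ + i + t = m + (ρ + i) by omega,
    hm (ρ + i) (by omega), Nat.add_comm t, add_assoc]

theorem RecurrentAt.map {t : ℕ} (hx : RecurrentAt x t) (f : A → B) : RecurrentAt (f ∘ x) t :=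
  fun n => (hx n).mono fun _ hm i hi => congrArg f (hm i hi)

theorem Recurrent.map (hx : Recurrent x) (f : A → B) : Recurrent (f ∘ x) :=
  ((hx.recurrentAt 0).map f).recurrent_shift

theorem UltimatelyRecurrent.map (hx : UltimatelyRecurrent x) (f : A → B) :
    UltimatelyRecurrent (f ∘ x) :=
  let ⟨k, hk⟩ := hx
  ⟨k, hk.map f⟩

/-- Take `(t, b)` minimising, under inclusion, the set of colours recurring along the window
`x[t, t + b)`. A recurrence `m` of that window with a recurring colour has the same set of
recurring colours along all its longer windows, and `p m` lies in it. -/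
theorem Recurrent.exists_window_recurs_with_colour {Q : Type*} [Finite Q] (hx : Recurrent x)
    (p : ℕ → Q) : ∃ t, ∀ n, ∃ᶠ m in atTop, p m = p t ∧ ∀ i < n, x (m + i) = x (t + i) := by
  let colours : ℕ × ℕ → Set Q := fun tn =>
    {s | ∃ᶠ m in atTop, p m = s ∧ ∀ i < tn.2, x (m + i) = x (tn.1 + i)}
  obtain ⟨_, hmin⟩ := exists_minimal_of_wellFoundedLT (· ∈ Set.range colours) ⟨_, (0, 0), rfl⟩
  obtain ⟨⟨t, b⟩, rfl⟩ := hmin.prop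
  obtain ⟨s, hs⟩ : ∃ s, ∃ᶠ m in atTop, p m = s ∧ ∀ i < b, x (m + i) = x (t + i) :=
    frequently_exists.mp ((hx.recurrentAt t b).mono fun m hm => ⟨p m, rfl, hm⟩)
  obtain ⟨m, rfl, hm⟩ := hs.exists
  refine ⟨m, fun n => ?_⟩
  have hsub : colours (m, max n b) ⊆ colours (t, b) := fun _ hs' =>
    hs'.mono fun _ ⟨hc, hw⟩ => ⟨hc, fun i hi => (hw i (by omega)).trans (hm i hi)⟩
  have hpm : p m ∈ colours (m, max n b) := (hmin.eq_of_le ⟨_, rfl⟩ hsub).symm ▸ hs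
  exact hpm.mono fun _ ⟨hc, hw⟩ => ⟨hc, fun i hi => hw i (by omega)⟩

theorem Recurrent.exists_recurrentAt_zip_run {Q : Type*} [Finite Q] {δ : Q → A → Q}
    {p : ℕ → Q} (hx : Recurrent x) (hp : IsRun δ p x) :
    ∃ t, RecurrentAt (fun n => (p n, x n)) t := by
  obtain ⟨t, ht⟩ := hx.exists_window_recurs_with_colour p
  refine ⟨t, fun n => (ht n).mono fun m ⟨h0, hw⟩ i hi => ?_⟩
  simp only [hp.add_eq_of_window h0 hw i hi.le, hw i hi]

theorem UltimatelyRecurrent.zip_run {Q : Type*} [Finite Q] {δ : Q → A → Q} {p : ℕ → Q}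
    (hx : UltimatelyRecurrent x) (hp : IsRun δ p x) :
    UltimatelyRecurrent fun n => (p n, x n) := by
  obtain ⟨k, hk⟩ := hx
  obtain ⟨t, ht⟩ := hk.exists_recurrentAt_zip_run (hp.shift k)
  exact ⟨t + k, by simpa only [add_assoc] using ht.recurrent_shift⟩

end Recurrence

/-- every initial Mealy machine transforms an ultimately recurrent
word to an ultimately recurrent word. -/
theorem transforms_ultimatelyRecurrent {Q A B : Type*} [Fintype Q]
    (M : Mealy Q A B) (q₀ : Q) (x : ℕ → A) (y : ℕ → B)
    (h : M.Transforms q₀ x y) (hx : UltimatelyRecurrent x) :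
    UltimatelyRecurrent y := by
  rw [show y = _ from funext h.apply_eq]
  exact (hx.zip_run (M.isRun_stepW_wordPrefix q₀ x)).map fun z => M.out z.1 z.2
end

section
/- Let f : ℕ → ℝ be any total function. The class K₁ = { x infinite word | f_x = O(f) } of infinite words whose subword complexity is O(f) is machine invariant: if x ∈ K₁ and some initial Mealy machine transforms x to y, then y ∈ K₁. -/
/-! Reading `x` from position `m` on, the machine is in the state it reached on the prefix
`x[0, m-1]`; so every length-`n` factor of `y` is the output of one of the `|Q|` states on a
length-`n` factor of `x`, whence `f_y(n) ≤ |Q| f_x(n)`. -/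

theorem wordPrefix_add {A : Type*} (x : ℕ → A) (m n : ℕ) :
    wordPrefix x (m + n) = wordPrefix x m ++ List.ofFn (fun i : Fin n => x (m + i)) := by
  simp [wordPrefix, List.ofFn_add]

theorem isFactorAt_ofFn {A : Type*} (x : ℕ → A) (m n : ℕ) :
    IsFactorAt x (List.ofFn fun i : Fin n => x (m + i)) m := by
  unfold IsFactorAt
  apply List.ext_getElem <;> simp

namespace Mealy

variable {Q A B : Type*}

theorem outW_append_s9 (M : Mealy Q A B) (q : Q) (u v : List A) :
    M.outW q (u ++ v) = M.outW q u ++ M.outW (M.stepW q u) v := by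
  induction u generalizing q with
  | nil => simp [outW, stepW]
  | cons a u ih => simp [outW, stepW, ih]

namespace Transforms

variable {M : Mealy Q A B} {q₀ : Q} {x : ℕ → A} {y : ℕ → B}

theorem ofFn_eq_outW (h : M.Transforms q₀ x y) (m n : ℕ) :
    List.ofFn (fun i : Fin n => y (m + i)) =
      M.outW (M.stepW q₀ (wordPrefix x m)) (List.ofFn fun i : Fin n => x (m + i)) := by
  have h_total := h (m + n)
  rw [wordPrefix_add, wordPrefix_add, outW_append_s9, h m] at h_total
  exact List.append_cancel_left h_total

theorem factors_subset_image_outW (h : M.Transforms q₀ x y) (n : ℕ) :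
    {w : List B | w.length = n ∧ IsFactor y w} ⊆
      (fun p : Q × List A => M.outW p.1 p.2) ''
        (Set.univ ×ˢ {w : List A | w.length = n ∧ IsFactor x w}) := by
  rintro w ⟨rfl, m, hw⟩
  refine ⟨(M.stepW q₀ (wordPrefix x m), List.ofFn fun i : Fin w.length => x (m + i)),
    ⟨Set.mem_univ _, List.length_ofFn, m, isFactorAt_ofFn x m w.length⟩, ?_⟩
  exact (hw.trans (h.ofFn_eq_outW m w.length)).symm

theorem complexity_le [Finite Q] [Finite A] (h : M.Transforms q₀ x y) (n : ℕ) :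
    complexity y n ≤ Nat.card Q * complexity x n := by
  have h_finite : {w : List A | w.length = n ∧ IsFactor x w}.Finite :=
    (List.finite_length_eq A n).subset fun _ hw => hw.1
  calc complexity y n
      ≤ ((fun p : Q × List A => M.outW p.1 p.2) ''
          (Set.univ ×ˢ {w : List A | w.length = n ∧ IsFactor x w})).ncard :=
        Set.ncard_le_ncard (h.factors_subset_image_outW n)
          ((Set.finite_univ.prod h_finite).image _)
    _ ≤ (Set.univ ×ˢ {w : List A | w.length = n ∧ IsFactor x w}).ncard :=
        Set.ncard_image_le (Set.finite_univ.prod h_finite)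
    _ = Nat.card Q * complexity x n := by rw [Set.ncard_prod, Set.ncard_univ, complexity]

end Transforms

end Mealy

theorem complexity_bigO_invariant_general (f : ℕ → ℝ)
    {Q A B : Type*} [Fintype Q] [Fintype A]
    (M : Mealy Q A B) (q₀ : Q) (x : ℕ → A) (y : ℕ → B)
    (h : M.Transforms q₀ x y)
    (hx : ∃ c > (0 : ℝ), ∀ n, (complexity x n : ℝ) ≤ c * |f n|) :
    ∃ c > (0 : ℝ), ∀ n, (complexity y n : ℝ) ≤ c * |f n| := by
  obtain ⟨c, hc, hx_le⟩ := hx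
  have hQ : (0 : ℝ) < Nat.card Q := by
    have : Nonempty Q := ⟨q₀⟩
    exact_mod_cast Nat.card_pos
  refine ⟨Nat.card Q * c, mul_pos hQ hc, fun n => ?_⟩
  calc (complexity y n : ℝ) ≤ Nat.card Q * complexity x n := by
        exact_mod_cast h.complexity_le n
    _ ≤ Nat.card Q * (c * |f n|) := by gcongr; exact hx_le n
    _ = Nat.card Q * c * |f n| := by ring

/-- the class of infinite words with subword complexity `O(f)`
is machine invariant. -/
theorem complexity_bigO_invariant (f : ℕ → ℝ)
    {Q A B : Type*} [Fintype Q] [Fintype A] [Fintype B]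
    (M : Mealy Q A B) (q₀ : Q) (x : ℕ → A) (y : ℕ → B)
    (h : M.Transforms q₀ x y)
    (hx : ∃ c > (0 : ℝ), ∀ n, (complexity x n : ℝ) ≤ c * |f n|) :
    ∃ c > (0 : ℝ), ∀ n, (complexity y n : ℝ) ≤ c * |f n| :=
  complexity_bigO_invariant_general f M q₀ x y h hx
end

section
/- The lattice 𝔏 of machine invariant sets (ordered by inclusion, with join = union and meet = intersection) is not a Boolean lattice: the machine invariant set K of ultimately recurrent words has no complement in 𝔏. Specifically, there exists an infinite word z that is neither ultimately periodic nor ultimately recurrent, together with an ultimately recurrent, non-ultimately-periodic word y such that z ⇀ y; any purported complement K' of K would contain z, hence y, contradicting K ∩ K' = ⊥ (the ultimately periodic words). -/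
/-! The period-doubling word `y n = v₂(n + 1) mod 2` is a Toeplitz word: shifting it by a multiple
of `2 ^ K` does not change it on `[0, 2 ^ K - 1)`, so it is recurrent, while comparing
`y (2 ^ K - 1) = K mod 2` with its value `p` places later shows that it is not ultimately periodic.
Adding `2` at the positions `2 ^ k - 1` gives a word `z` that a one-state machine reduces mod 2
to `y`. The factor of `z` between the markers at `2 ^ k - 1` and `2 ^ (k + 1) - 1` never recurs,
because no two powers of two beyond `2 ^ k` differ by `2 ^ k`. So `z` lies in every complement `K'`
of the ultimately recurrent words, and then so does `y`, which is ultimately recurrent but not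
ultimately periodic. -/

lemma padicValNat_add_of_lt_of_pow_dvd {p n m K : ℕ} [Fact p.Prime] (hn : n ≠ 0)
    (hnK : padicValNat p n < K) (hm : p ^ K ∣ m) : padicValNat p (n + m) = padicValNat p n := by
  have hval : (padicValNat p (n + m) : ℕ∞) = padicValNat p n := by
    rw [padicValNat_eq_emultiplicity (by omega), padicValNat_eq_emultiplicity hn,
      ← Int.natCast_emultiplicity, ← Int.natCast_emultiplicity, Nat.cast_add, add_comm]
    refine emultiplicity_add_of_gt ?_
    rw [Int.natCast_emultiplicity, Int.natCast_emultiplicity, ← padicValNat_eq_emultiplicity hn]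
    exact (Nat.cast_lt.mpr hnK).trans_le (pow_dvd_iff_le_emultiplicity.mp hm)
  exact_mod_cast hval

lemma two_pow_add_ne_two_pow {k p a : ℕ} (hp : 0 < p) (hpk : p < 2 ^ k) : 2 ^ k + p ≠ 2 ^ a := by
  intro h
  rcases le_or_gt a k with hak | hka
  · have := Nat.pow_le_pow_right two_pos hak
    omega
  · have := Nat.pow_le_pow_right two_pos hka
    rw [pow_succ] at this
    omega

lemma mem_FWords_of_lt {x : ℕ → ℕ} {b : ℕ} (h : ∀ n, x n < b) : x ∈ FWords :=
  (Set.finite_Iio b).subset (Set.range_subset_iff.mpr h)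

lemma UltimatelyPeriodic.exists_period {A : Type*} {x : ℕ → A} (h : UltimatelyPeriodic x) :
    ∃ p > 0, ∃ N, ∀ n ≥ N, x (n + p) = x n := by
  obtain ⟨u, v, hv, rfl⟩ := h
  refine ⟨v.length, List.length_pos_iff.mpr hv, u.length, fun n hn => ?_⟩
  simp only [upWord, dif_neg (show ¬n + v.length < u.length by omega),
    dif_neg (show ¬n < u.length by omega), Nat.sub_add_comm hn, Nat.add_mod_right]

lemma recurrent_of_forall_exists_shift {A : Type*} {x : ℕ → A}
    (h : ∀ L N, ∃ p ≥ N, ∀ n < L, x (n + p) = x n) : Recurrent x := by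
  rintro w ⟨m, hm⟩ N
  obtain ⟨p, hpN, hp⟩ := h (m + w.length) N
  refine ⟨m + p, by omega, ?_⟩
  rw [IsFactorAt] at hm ⊢
  conv_lhs => rw [hm]
  congr 1
  funext i
  rw [add_right_comm, hp _ (by omega)]

lemma UltimatelyRecurrent.exists_late_occurrence {A : Type*} {x : ℕ → A}
    (h : UltimatelyRecurrent x) : ∃ s, ∀ a ≥ s, ∀ L N, ∃ m ≥ N, ∀ i ≤ L, x (m + i) = x (a + i) := by
  obtain ⟨s, hs⟩ := h
  refine ⟨s, fun a ha L N => ?_⟩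
  obtain ⟨m, hmN, hm⟩ := hs (List.ofFn fun i : Fin (L + 1) => x (a + i))
    ⟨a - s, by simp [IsFactorAt, Nat.sub_add_cancel ha, add_right_comm]⟩ N
  refine ⟨m + s, by omega, fun i hi => ?_⟩
  simp only [IsFactorAt, List.length_ofFn, List.ofFn_inj] at hm
  rw [add_right_comm]
  exact (congrFun hm ⟨i, Nat.lt_succ_of_le hi⟩).symm

lemma Mealy.outW_eq_map {Q A B : Type*} [Subsingleton Q] (M : Mealy Q A B) (q : Q) (l : List A) :
    M.outW q l = l.map (M.out q) := by
  induction l generalizing q with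
  | nil => rfl
  | cons a u ih => rw [Mealy.outW, Subsingleton.elim (M.step q a) q, ih, List.map]

lemma transN_comp {x : ℕ → ℕ} (hx : x ∈ FWords) (f : ℕ → ℕ) : TransN x (f ∘ x) := by
  let A := hx.toFinset
  have hxA (n : ℕ) : x n ∈ A := hx.mem_toFinset.mpr ⟨n, rfl⟩
  let V : MachineN :=
    { k := 1, A := A, B := A.image f, q₀ := 0
      M := { step := fun _ _ => 0, out := fun _ a => ⟨f a, Finset.mem_image_of_mem f a.2⟩ } }
  refine ⟨V, fun n => ⟨x n, hxA n⟩, fun n => ⟨f (x n), Finset.mem_image_of_mem f (hxA n)⟩,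
    fun _ => rfl, fun _ => rfl, fun n => ?_⟩
  rw [Mealy.outW_eq_map, wordPrefix, wordPrefix, List.map_ofFn]
  rfl

def periodDoubling (n : ℕ) : ℕ := padicValNat 2 (n + 1) % 2

def markedPeriodDoubling (n : ℕ) : ℕ :=
  periodDoubling n + if (n + 1).isPowerOfTwo then 2 else 0

lemma periodDoubling_lt (n : ℕ) : periodDoubling n < 2 := Nat.mod_lt _ two_pos

lemma markedPeriodDoubling_lt (n : ℕ) : markedPeriodDoubling n < 4 := by
  have := periodDoubling_lt n
  unfold markedPeriodDoubling
  split <;> omega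

lemma markedPeriodDoubling_mod_two (n : ℕ) : markedPeriodDoubling n % 2 = periodDoubling n := by
  have := periodDoubling_lt n
  unfold markedPeriodDoubling
  split <;> omega

lemma two_le_markedPeriodDoubling_iff (n : ℕ) :
    2 ≤ markedPeriodDoubling n ↔ ∃ k, n + 1 = 2 ^ k := by
  have := periodDoubling_lt n
  unfold markedPeriodDoubling
  split <;> simp_all [Nat.isPowerOfTwo]

lemma periodDoubling_add_mul_two_pow {n K : ℕ} (hn : n + 1 < 2 ^ K) (t : ℕ) :
    periodDoubling (n + t * 2 ^ K) = periodDoubling n := by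
  have hv : padicValNat 2 (n + 1) < K := (Nat.pow_lt_pow_iff_right one_lt_two).mp
    ((Nat.le_of_dvd n.succ_pos pow_padicValNat_dvd).trans_lt hn)
  rw [periodDoubling, periodDoubling, add_right_comm,
    padicValNat_add_of_lt_of_pow_dvd n.succ_ne_zero hv (dvd_mul_left _ t)]

lemma periodDoubling_recurrent : Recurrent periodDoubling := by
  refine recurrent_of_forall_exists_shift fun L N => ⟨(N + 1) * 2 ^ (L + 1), ?_, fun n hn => ?_⟩
  · nlinarith [Nat.one_le_two_pow (n := L + 1)]
  · exact periodDoubling_add_mul_two_pow (by have := Nat.lt_two_pow_self (n := L + 1); omega) _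

lemma periodDoubling_not_ultimatelyPeriodic : ¬ UltimatelyPeriodic periodDoubling := by
  intro h
  obtain ⟨p, hp, N, hper⟩ := h.exists_period
  have parity_eq (K : ℕ) (hK : padicValNat 2 p < K) (hN : N < 2 ^ K) :
      K % 2 = padicValNat 2 p % 2 := by
    have := hper (2 ^ K - 1) (by omega)
    rwa [periodDoubling, periodDoubling, Nat.sub_add_cancel Nat.one_le_two_pow,
      padicValNat.prime_pow, show 2 ^ K - 1 + p + 1 = p + 1 * 2 ^ K by omega,
      padicValNat_add_of_lt_of_pow_dvd hp.ne' hK (dvd_mul_left _ _), eq_comm] at this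
  have h₁ := parity_eq (padicValNat 2 p + N + 1) (by omega)
    (by have := Nat.lt_two_pow_self (n := padicValNat 2 p + N + 1); omega)
  have h₂ := parity_eq (padicValNat 2 p + N + 2) (by omega)
    (by have := Nat.lt_two_pow_self (n := padicValNat 2 p + N + 2); omega)
  omega

lemma markedPeriodDoubling_not_ultimatelyPeriodic : ¬ UltimatelyPeriodic markedPeriodDoubling := by
  intro h
  obtain ⟨p, hp, N, hper⟩ := h.exists_period
  set k := N + p + 1
  have hk := Nat.lt_two_pow_self (n := k)
  have hmark : 2 ≤ markedPeriodDoubling (2 ^ k - 1) :=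
    (two_le_markedPeriodDoubling_iff _).mpr ⟨k, by omega⟩
  rw [← hper _ (by omega), two_le_markedPeriodDoubling_iff] at hmark
  obtain ⟨a, ha⟩ := hmark
  exact two_pow_add_ne_two_pow (k := k) hp (by omega) (a := a) (by omega)

lemma markedPeriodDoubling_not_ultimatelyRecurrent :
    ¬ UltimatelyRecurrent markedPeriodDoubling := by
  intro h
  obtain ⟨s, hs⟩ := h.exists_late_occurrence
  set k := s + 1
  have hk := Nat.lt_two_pow_self (n := k)
  obtain ⟨m, hm, hocc⟩ := hs (2 ^ k - 1) (by omega) (2 ^ k) (2 ^ k)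
  have hfirst : 2 ≤ markedPeriodDoubling (m + 0) := by
    rw [hocc 0 (by omega), two_le_markedPeriodDoubling_iff]
    exact ⟨k, by omega⟩
  have hsecond : 2 ≤ markedPeriodDoubling (m + 2 ^ k) := by
    rw [hocc _ le_rfl, two_le_markedPeriodDoubling_iff]
    exact ⟨k + 1, by rw [pow_succ 2 k]; omega⟩
  obtain ⟨b, hb⟩ := (two_le_markedPeriodDoubling_iff _).mp hfirst
  obtain ⟨c, hc⟩ := (two_le_markedPeriodDoubling_iff _).mp hsecond
  exact two_pow_add_ne_two_pow (k := b) (p := 2 ^ k) (a := c) (by positivity) (by omega) (by omega)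

lemma not_exists_complement_of_transN {z y : ℕ → ℕ} (hz : z ∈ FWords)
    (hz_ur : ¬ UltimatelyRecurrent z) (hy : y ∈ FWords) (hy_ur : UltimatelyRecurrent y)
    (hy_up : ¬ UltimatelyPeriodic y) (hzy : TransN z y) :
    ¬ ∃ K' : Set (ℕ → ℕ), MachineInvariant K' ∧
        {x ∈ FWords | UltimatelyRecurrent x} ∩ K' = {x ∈ FWords | UltimatelyPeriodic x} ∧
        {x ∈ FWords | UltimatelyRecurrent x} ∪ K' = FWords := by
  rintro ⟨K', ⟨-, -, hK'⟩, hmeet, hjoin⟩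
  have hzK' : z ∈ K' := by
    rw [← hjoin] at hz
    exact hz.resolve_left fun h => hz_ur h.2
  have hy_meet : y ∈ {x ∈ FWords | UltimatelyRecurrent x} ∩ K' :=
    ⟨⟨hy, hy_ur⟩, hK' z hzK' y hzy⟩
  rw [hmeet] at hy_meet
  exact hy_up hy_meet.2

/-- the lattice of machine invariant sets is not Boolean: the
machine invariant set of ultimately recurrent words has no complement.
Moreover there are words `z ⇀ y` with `z` neither ultimately periodic nor
ultimately recurrent and `y` ultimately recurrent but not ultimately periodic. -/
theorem not_boolean :
    (¬ ∃ K' : Set (ℕ → ℕ), MachineInvariant K' ∧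
        {x ∈ FWords | UltimatelyRecurrent x} ∩ K'
          = {x ∈ FWords | UltimatelyPeriodic x} ∧
        {x ∈ FWords | UltimatelyRecurrent x} ∪ K' = FWords) ∧
    ∃ z y : ℕ → ℕ, z ∈ FWords ∧ y ∈ FWords ∧
      ¬ UltimatelyPeriodic z ∧ ¬ UltimatelyRecurrent z ∧
      UltimatelyRecurrent y ∧ ¬ UltimatelyPeriodic y ∧ TransN z y := by
  have hz : markedPeriodDoubling ∈ FWords := mem_FWords_of_lt markedPeriodDoubling_lt
  have hy : periodDoubling ∈ FWords := mem_FWords_of_lt periodDoubling_lt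
  have hy_ur : UltimatelyRecurrent periodDoubling := ⟨0, periodDoubling_recurrent⟩
  have hzy : TransN markedPeriodDoubling periodDoubling := by
    convert transN_comp hz (· % 2)
    exact funext fun n => (markedPeriodDoubling_mod_two n).symm
  exact ⟨not_exists_complement_of_transN hz markedPeriodDoubling_not_ultimatelyRecurrent hy hy_ur
      periodDoubling_not_ultimatelyPeriodic hzy,
    _, _, hz, hy, markedPeriodDoubling_not_ultimatelyPeriodic,
    markedPeriodDoubling_not_ultimatelyRecurrent, hy_ur, periodDoubling_not_ultimatelyPeriodic, hzy⟩
end
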